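/- arXiv:1909.01508 — 4 statements merged into one kernel-verified Lean document; each statement's English description precedes it below -/
import Mathlib

section
/- For 0 < q < 1, the function f(z) = ∑_{p≥0} log(1 + e^z q^{2p+1}) has Taylor expansion f(z) = ∑_{n≥0} (z^n/n!) ∑_{k≥1} (-1)^{k+1} k^{n-1} q^k/(1 - q^{2k}) valid for z in a neighborhood of 0. -/
open Real

private lemma log_one_add_hasSum {x : ℝ} (hx0 : 0 < x) (hx1 : x < 1) :
    HasSum (fun k : ℕ => (-1:ℝ)^k * x^(k+1)/(k+1)) (Real.log (1 + x)) := by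
  have h : |(-x)| < 1 := by rw [abs_neg, abs_of_pos hx0]; exact hx1
  have h1 := (hasSum_pow_div_log_of_abs_lt_one h).neg
  rw [sub_neg_eq_add, neg_neg] at h1
  refine h1.congr_fun fun n => ?_
  rw [neg_pow, pow_succ]
  ring

set_option maxHeartbeats 2000000 in
/-- Taylor expansion of `f(z) = ∑_{p≥0} log(1 + e^z q^{2p+1})` for `0 < q < 1`. -/
theorem log_sum_taylor (q : ℝ) (hq0 : 0 < q) (hq1 : q < 1) :
    ∃ ε > 0, ∀ z : ℝ, |z| < ε →
      (∑' p : ℕ, Real.log (1 + Real.exp z * q ^ (2 * p + 1))) =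
        ∑' n : ℕ, z ^ n / (Nat.factorial n) *
          ∑' k : ℕ, (-1 : ℝ) ^ k * ((k : ℝ) + 1) ^ ((n : ℤ) - 1) * q ^ (k + 1) /
            (1 - q ^ (2 * (k + 1))) := by
  refine ⟨-Real.log q, neg_pos.2 (Real.log_neg hq0 hq1), fun z hz => ?_⟩
  -- basic facts
  set c : ℝ := Real.exp z * q with hc_def
  have hez : (0:ℝ) < Real.exp z := Real.exp_pos z
  have hc0 : 0 < c := mul_pos hez hq0
  have hc1 : c < 1 := by
    have h1 : Real.exp z < Real.exp (-Real.log q) := Real.exp_lt_exp.2 ((le_abs_self z).trans_lt hz)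
    rw [Real.exp_neg, Real.exp_log hq0] at h1
    calc c < q⁻¹ * q := by rw [hc_def]; nlinarith
      _ = 1 := inv_mul_cancel₀ hq0.ne'
  have hc1' : q * Real.exp |z| < 1 := by
    have h1 : Real.exp |z| < Real.exp (-Real.log q) := Real.exp_lt_exp.2 hz
    rw [Real.exp_neg, Real.exp_log hq0] at h1
    calc q * Real.exp |z| < q * q⁻¹ := by nlinarith [Real.exp_pos |z|]
      _ = 1 := mul_inv_cancel₀ hq0.ne'
  have hq2 : q^2 < 1 := pow_lt_one₀ hq0.le hq1 two_ne_zero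
  have hq20 : (0:ℝ) ≤ q^2 := by positivity
  have hr1 : ∀ k : ℕ, q ^ (2*(k+1)) < 1 := fun k => pow_lt_one₀ hq0.le hq1 (by omega)
  have hrq2 : ∀ k : ℕ, q ^ (2*(k+1)) ≤ q^2 := fun k =>
    pow_le_pow_of_le_one hq0.le hq1.le (by omega)
  have hd : ∀ k : ℕ, 0 < 1 - q ^ (2*(k+1)) := fun k => by linarith [hr1 k]
  have hk1 : ∀ k : ℕ, (0:ℝ) < (k:ℝ) + 1 := fun k => by positivity
  set a : ℕ → ℝ := fun k => (-1)^k * q^(k+1) / (((k:ℝ)+1) * (1 - q^(2*(k+1)))) with ha_def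
  -- the double sum for the LHS
  set F : ℕ × ℕ → ℝ := fun pk =>
    (-1:ℝ)^pk.2 * (Real.exp z * q ^ (2*pk.1+1))^(pk.2+1) / ((pk.2:ℝ)+1) with hF_def
  have hx0 : ∀ p : ℕ, 0 < Real.exp z * q ^ (2*p+1) := fun p => by positivity
  have hxc : ∀ p : ℕ, Real.exp z * q ^ (2*p+1) = c * (q^2)^p := fun p => by
    rw [hc_def, ← pow_mul, mul_assoc, ← pow_succ']
  have hx1 : ∀ p : ℕ, Real.exp z * q ^ (2*p+1) < 1 := fun p => by
    rw [hxc p]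
    calc c * (q^2)^p ≤ c * 1 := by
          have : (q^2)^p ≤ 1 := pow_le_one₀ hq20 hq2.le
          nlinarith
      _ = c := mul_one c
      _ < 1 := hc1
  have hcsum : Summable (fun k : ℕ => c^(k+1)) := by
    simpa [pow_succ] using (summable_geometric_of_lt_one hc0.le hc1).mul_right c
  have hFsum : Summable F := by
    apply Summable.of_norm_bounded (g := fun pk : ℕ × ℕ => (q^2)^pk.1 * c^(pk.2+1))
    · exact (summable_geometric_of_lt_one hq20 hq2).mul_of_nonneg hcsum
        (fun p => by positivity) (fun k => by positivity)
    · rintro ⟨p, k⟩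
      have hx := hx0 p
      simp only [hF_def, Real.norm_eq_abs, abs_div, abs_mul, abs_pow, abs_neg, abs_one, one_pow,
        one_mul, abs_of_pos hx, abs_of_pos (hk1 k)]
      calc (Real.exp z * q ^ (2*p+1))^(k+1) / ((k:ℝ)+1)
          ≤ (Real.exp z * q ^ (2*p+1))^(k+1) / 1 := by
            apply div_le_div_of_nonneg_left (by positivity) one_pos
            · exact_mod_cast Nat.succ_le_succ (Nat.zero_le k)
        _ = (c * (q^2)^p)^(k+1) := by rw [div_one, hxc p]
        _ = c^(k+1) * ((q^2)^p)^(k+1) := mul_pow _ _ _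
        _ ≤ c^(k+1) * (q^2)^p := by
            have h1 : ((q^2)^p)^(k+1) ≤ (q^2)^p :=
              pow_le_of_le_one (by positivity) (pow_le_one₀ hq20 hq2.le) (by omega)
            nlinarith [pow_pos hc0 (k+1)]
        _ = (q^2)^p * c^(k+1) := mul_comm _ _
  -- Step A : LHS = ∑' k, a k * exp z ^ (k+1)
  have stepA : (∑' p : ℕ, Real.log (1 + Real.exp z * q ^ (2 * p + 1)))
      = ∑' k : ℕ, a k * Real.exp z ^ (k+1) := by
    have h1 : ∀ p : ℕ, Real.log (1 + Real.exp z * q ^ (2*p+1)) = ∑' k : ℕ, F (p, k) := fun p =>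
      (log_one_add_hasSum (hx0 p) (hx1 p)).tsum_eq.symm
    rw [tsum_congr h1, ← Summable.tsum_comm (f := fun p k => F (p, k)) hFsum]
    refine tsum_congr fun k => ?_
    have h2 : ∀ p : ℕ, F (p, k)
        = ((-1:ℝ)^k * Real.exp z ^(k+1) * q^(k+1) / ((k:ℝ)+1)) * (q^(2*(k+1)))^p := by
      intro p
      have hpow : (((q^2):ℝ)^p)^(k+1) = (q^(2*(k+1)))^p := by
        rw [← pow_mul, ← pow_mul, ← pow_mul]
        congr 1
        ring
      simp only [hF_def]
      rw [hxc p, mul_pow c, hpow, hc_def, mul_pow (Real.exp z) q]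
      ring
    rw [tsum_congr h2, tsum_mul_left, tsum_geometric_of_lt_one (by positivity) (hr1 k), ha_def]
    have := (hd k).ne'
    have := (hk1 k).ne'
    field_simp
  -- the double sum for the RHS, indexed as (k, n)
  set G : ℕ × ℕ → ℝ := fun kn =>
    a kn.1 * (((kn.1:ℝ)+1)*z)^kn.2 / (Nat.factorial kn.2) with hG_def
  have hGabs : ∀ kn : ℕ × ℕ,
      |G kn| = |a kn.1| * (((kn.1:ℝ)+1)*|z|)^kn.2 / (Nat.factorial kn.2) := by
    rintro ⟨k, n⟩
    simp only [hG_def, abs_div, abs_mul, abs_pow, abs_mul, Nat.abs_cast,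
      abs_of_pos (hk1 k)]
  have hGsum : Summable G := by
    rw [← summable_abs_iff]
    have habs_nonneg : ∀ kn : ℕ × ℕ, (0:ℝ) ≤ |G kn| := fun kn => abs_nonneg _
    rw [summable_prod_of_nonneg habs_nonneg]
    constructor
    · intro k
      apply Summable.congr ((Real.summable_pow_div_factorial (((k:ℝ)+1)*|z|)).mul_left |a k|)
      intro n
      rw [hGabs ⟨k, n⟩, mul_div_assoc]
    · apply Summable.of_nonneg_of_le (fun k => tsum_nonneg fun n => abs_nonneg _)
        (f := fun k => (1 - q^2)⁻¹ * (q * Real.exp |z|)^(k+1))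
      · intro k
        have hsum : (∑' n : ℕ, |G (k, n)|)
            = |a k| * Real.exp (((k:ℝ)+1)*|z|) := by
          have heq : ∀ n : ℕ, |G (k, n)| = |a k| * ((((k:ℝ)+1)*|z|)^n / (Nat.factorial n)) :=
            fun n => by rw [hGabs ⟨k, n⟩, mul_div_assoc]
          rw [tsum_congr heq, tsum_mul_left, Real.exp_eq_exp_ℝ, NormedSpace.exp_eq_tsum_div]
        rw [hsum]
        have hak : |a k| ≤ q^(k+1) / (1 - q^2) := by
          rw [ha_def]
          rw [abs_div, abs_mul, abs_pow, abs_neg, abs_one, one_pow, one_mul,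
            abs_of_pos (pow_pos hq0 (k+1)), abs_of_pos (mul_pos (hk1 k) (hd k))]
          apply div_le_div_of_nonneg_left (by positivity) (by linarith)
          calc 1 - q^2 ≤ 1 - q^(2*(k+1)) := by linarith [hrq2 k]
            _ = 1 * (1 - q^(2*(k+1))) := (one_mul _).symm
            _ ≤ ((k:ℝ)+1) * (1 - q^(2*(k+1))) := by
                apply mul_le_mul_of_nonneg_right _ (hd k).le
                exact_mod_cast Nat.one_le_iff_ne_zero.2 (Nat.succ_ne_zero k)
        have hexp : Real.exp (((k:ℝ)+1)*|z|) = Real.exp |z| ^ (k+1) := by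
          rw [show ((k:ℝ)+1) = ((k+1 : ℕ) : ℝ) from by push_cast; ring, Real.exp_nat_mul]
        rw [hexp]
        calc |a k| * Real.exp |z| ^ (k+1) ≤ (q^(k+1) / (1 - q^2)) * Real.exp |z| ^ (k+1) := by
              apply mul_le_mul_of_nonneg_right hak (by positivity)
          _ = (1 - q^2)⁻¹ * (q * Real.exp |z|)^(k+1) := by
              rw [mul_pow]; field_simp
      · have : Summable (fun k : ℕ => (q * Real.exp |z|)^(k+1)) := by
          simpa [pow_succ] using
            (summable_geometric_of_lt_one (by positivity) hc1').mul_right (q * Real.exp |z|)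
        exact this.mul_left _
  -- Step B : RHS = ∑' k, a k * exp z ^ (k+1)
  have stepB : (∑' n : ℕ, z ^ n / (Nat.factorial n) *
          ∑' k : ℕ, (-1 : ℝ) ^ k * ((k : ℝ) + 1) ^ ((n : ℤ) - 1) * q ^ (k + 1) /
            (1 - q ^ (2 * (k + 1))))
      = ∑' k : ℕ, a k * Real.exp z ^ (k+1) := by
    have h1 : ∀ n : ℕ, z ^ n / (Nat.factorial n) *
          ∑' k : ℕ, (-1 : ℝ) ^ k * ((k : ℝ) + 1) ^ ((n : ℤ) - 1) * q ^ (k + 1) /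
            (1 - q ^ (2 * (k + 1))) = ∑' k : ℕ, G (k, n) := by
      intro n
      rw [← tsum_mul_left]
      refine tsum_congr fun k => ?_
      have hzpow : ((k:ℝ)+1) ^ ((n : ℤ) - 1) = ((k:ℝ)+1)^n / ((k:ℝ)+1) := by
        rw [zpow_sub₀ (hk1 k).ne', zpow_natCast, zpow_one]
      simp only [hG_def]
      rw [hzpow, mul_pow ((k:ℝ)+1) z n]
      simp only [ha_def]
      have := (hd k).ne'
      have := (hk1 k).ne'
      field_simp
    rw [tsum_congr h1, Summable.tsum_comm (f := fun k n => G (k, n)) hGsum]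
    refine tsum_congr fun k => ?_
    have h2 : ∀ n : ℕ, G (k, n) = a k * ((((k:ℝ)+1)*z)^n / (Nat.factorial n)) := fun n => by
      simp only [hG_def]; rw [mul_div_assoc]
    have hexp : Real.exp (((k:ℝ)+1)*z) = ∑' x : ℕ, (((k:ℝ)+1)*z)^x / (Nat.factorial x) := by
      rw [Real.exp_eq_exp_ℝ, NormedSpace.exp_eq_tsum_div]
    rw [tsum_congr h2, tsum_mul_left, ← hexp,
      show ((k:ℝ)+1) = ((k+1 : ℕ) : ℝ) from by push_cast; ring, Real.exp_nat_mul]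
  rw [stepA, stepB]
end

section
/- For k = 1/√2, the variance of the discrete normal distribution with q = e^{-π} equals 1/(4π); that is, (1/θ₃(e^{-π})) ∑_{p∈ℤ} p² e^{-π p²} = (1/(4π)) ∑_{p∈ℤ} e^{-π p²}. -/
open Real

private lemma summable_sq_exp {c : ℝ} (hc : 0 < c) :
    Summable (fun n : ℤ => (n : ℝ) ^ 2 * Real.exp (-c * (n : ℝ) ^ 2)) := by
  have hnat : Summable (fun n : ℕ => (n : ℝ) ^ 2 * Real.exp (-c * (n : ℝ) ^ 2)) := by
    refine Summable.of_nonneg_of_le (fun n => by positivity) (fun n => ?_)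
      (Real.summable_pow_mul_exp_neg_nat_mul 2 hc)
    refine mul_le_mul_of_nonneg_left ?_ (sq_nonneg _)
    rw [Real.exp_le_exp]
    have hn : (n : ℝ) ≤ (n : ℝ) ^ 2 := by exact_mod_cast Nat.le_self_pow two_ne_zero n
    nlinarith [mul_nonneg hc.le (sub_nonneg.mpr hn)]
  apply Summable.of_nat_of_neg <;> simpa using hnat

private lemma summable_exp_sq {c : ℝ} (hc : 0 < c) :
    Summable (fun n : ℤ => Real.exp (-c * (n : ℝ) ^ 2)) := by
  have hnat : Summable (fun n : ℕ => Real.exp (-c * (n : ℝ) ^ 2)) := by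
    refine Summable.of_nonneg_of_le (fun n => Real.exp_nonneg _) (fun n => ?_)
      (Real.summable_exp_nat_mul_iff.mpr (neg_lt_zero.mpr hc))
    rw [Real.exp_le_exp]
    have hn : (n : ℝ) ≤ (n : ℝ) ^ 2 := by exact_mod_cast Nat.le_self_pow two_ne_zero n
    nlinarith [mul_nonneg hc.le (sub_nonneg.mpr hn)]
  apply Summable.of_nat_of_neg <;> simpa using hnat

/-- The variance of the discrete normal distribution with `q = e^{-π}` is `1/(4π)`. -/
theorem theta3_variance_lemniscatic :
    (∑' p : ℤ, (p : ℝ) ^ 2 * Real.exp (-π * (p : ℝ) ^ 2)) =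
      (1 / (4 * π)) * ∑' p : ℤ, Real.exp (-π * (p : ℝ) ^ 2) := by
  set F : ℝ → ℝ := fun b => ∑' n : ℤ, Real.exp (-π * b * (n : ℝ) ^ 2) with hFdef
  set g' : ℤ → ℝ → ℝ := fun n y => Real.exp (-π * y * (n : ℝ) ^ 2) * (-π * (n : ℝ) ^ 2)
    with hg'def
  -- derivative of F on (1/2, ∞)
  have hderiv : ∀ a ∈ Set.Ioi (1/2 : ℝ), HasDerivAt F (∑' n : ℤ, g' n a) a := by
    intro a ha
    apply hasDerivAt_tsum_of_isPreconnected
      (u := fun n : ℤ => π * ((n : ℝ) ^ 2 * Real.exp (-(π/2) * (n : ℝ) ^ 2)))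
      ?_ isOpen_Ioi (isPreconnected_Ioi) ?_ ?_ (show (1:ℝ) ∈ Set.Ioi (1/2 : ℝ) by norm_num)
      ?_ ha
    · exact (summable_sq_exp (by positivity)).mul_left π
    · intro n y _
      have h1 : HasDerivAt (fun b : ℝ => -π * b * (n : ℝ) ^ 2) (-π * (n : ℝ) ^ 2) y := by
        simpa using ((hasDerivAt_id y).const_mul (-π)).mul_const ((n : ℝ) ^ 2)
      exact h1.exp
    · intro n y hy
      have hy' : (1/2 : ℝ) < y := hy
      have habs : ‖g' n y‖ = Real.exp (-π * y * (n : ℝ) ^ 2) * (π * (n : ℝ) ^ 2) := by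
        rw [hg'def]
        simp only [Real.norm_eq_abs, abs_mul, Real.abs_exp, abs_neg,
          abs_of_nonneg pi_pos.le, abs_of_nonneg (sq_nonneg ((n : ℝ)))]
      show ‖g' n y‖ ≤ π * ((n : ℝ) ^ 2 * Real.exp (-(π/2) * (n : ℝ) ^ 2))
      rw [habs, show π * ((n:ℝ)^2 * Real.exp (-(π/2) * (n:ℝ)^2)) =
          Real.exp (-(π/2) * (n:ℝ)^2) * (π * (n:ℝ)^2) by ring]
      refine mul_le_mul_of_nonneg_right ?_ (by positivity)
      rw [Real.exp_le_exp]
      nlinarith [mul_nonneg (mul_nonneg pi_pos.le (sq_nonneg ((n : ℝ)))) (by linarith : (0:ℝ) ≤ y - 1/2)]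
    · simpa [mul_one] using summable_exp_sq pi_pos
  have hF1 : HasDerivAt F (∑' n : ℤ, g' n 1) 1 := hderiv 1 (by norm_num)
  set D : ℝ := ∑' n : ℤ, g' n 1 with hDdef
  -- functional equation
  set G : ℝ → ℝ := fun a => F (1/a) / Real.sqrt a with hGdef
  have hEqOn : ∀ a ∈ Set.Ioi (0:ℝ), F a = G a := by
    intro a ha
    have ha' : (0:ℝ) < a := ha
    have h2 : F (1/a) = ∑' n : ℤ, Real.exp (-π / a * (n : ℝ) ^ 2) := by
      rw [hFdef]
      exact tsum_congr fun n => by rw [mul_one_div]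
    calc F a = 1 / a ^ ((1:ℝ)/2) * ∑' n : ℤ, Real.exp (-π / a * (n : ℝ) ^ 2) :=
          Real.tsum_exp_neg_mul_int_sq ha'
      _ = G a := by
          rw [hGdef]
          simp only
          rw [h2, Real.sqrt_eq_rpow, one_div_mul_eq_div]
  have hEv : F =ᶠ[nhds 1] G :=
    Filter.eventuallyEq_of_mem (isOpen_Ioi.mem_nhds (by norm_num : (1:ℝ) ∈ Set.Ioi 0)) hEqOn
  -- derivative of G at 1
  have h_inv : HasDerivAt (fun a : ℝ => 1/a) (-1 : ℝ) 1 := by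
    have := hasDerivAt_inv (one_ne_zero (α := ℝ))
    norm_num at this
    simpa [one_div] using this
  have hF_comp : HasDerivAt (fun a : ℝ => F (1/a)) (D * (-1)) 1 := by
    have := HasDerivAt.comp 1 (by simpa using hF1) h_inv
    simpa [Function.comp_def] using this
  have hsqrt : HasDerivAt Real.sqrt (1/2 : ℝ) 1 := by
    have := Real.hasDerivAt_sqrt (one_ne_zero (α := ℝ))
    norm_num at this
    simpa using this
  have hG : HasDerivAt G ((D * (-1) * Real.sqrt 1 - F (1/1) * (1/2)) / (Real.sqrt 1) ^ 2) 1 :=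
    hF_comp.div hsqrt (by simp)
  have hF1' : HasDerivAt F ((D * (-1) * Real.sqrt 1 - F (1/1) * (1/2)) / (Real.sqrt 1) ^ 2) 1 :=
    hG.congr_of_eventuallyEq hEv
  have hDeq : D = (D * (-1) * Real.sqrt 1 - F (1/1) * (1/2)) / (Real.sqrt 1) ^ 2 :=
    hF1.unique hF1'
  rw [Real.sqrt_one] at hDeq
  norm_num at hDeq
  have hD4 : D = -(F 1) / 4 := by linarith [hDeq]
  have hDS : D = -π * ∑' p : ℤ, (p : ℝ) ^ 2 * Real.exp (-π * (p : ℝ) ^ 2) := by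
    rw [hDdef, ← tsum_mul_left]
    apply tsum_congr
    intro n
    simp only [hg'def, mul_one]
    ring
  have hFT : F 1 = ∑' p : ℤ, Real.exp (-π * (p : ℝ) ^ 2) := by
    rw [hFdef]
    simp only [mul_one]
  rw [hDS, hFT] at hD4
  have hπ : (π : ℝ) ≠ 0 := pi_ne_zero
  field_simp at hD4 ⊢
  linarith [hD4]
end

section
/- Partial fraction identity: for real x > 0, ∑_{p≥1} (−1)^p e^{−2πpx} = −1/2 + (i/π) ∑_{m≥1} ( 1/(2m−1+2ix) − 1/(2m−1−2ix) ). -/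
open Real

open intervalIntegral
lemma two_pi_pos' : (0:ℝ) < 0 + 2 * π := by positivity

lemma cosh_fourierCoeffOn (c : ℝ) (hc : c ≠ 0) (n : ℤ) :
    fourierCoeffOn two_pi_pos' (fun t => Complex.cosh ((c * (t - π) : ℝ))) n
      = ((c : ℂ) * Complex.sinh (π * c) / π) / (c ^ 2 + n ^ 2) := by
  have hπ : (π : ℂ) ≠ 0 := Complex.ofReal_ne_zero.2 Real.pi_ne_zero
  have h1 : ((c : ℂ) - Complex.I * n) ≠ 0 := by
    intro h
    have := congrArg Complex.re h
    simp [Complex.sub_re, Complex.mul_re] at this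
    exact hc this
  have h2 : (-(c : ℂ) - Complex.I * n) ≠ 0 := by
    intro h
    have := congrArg Complex.re h
    simp [Complex.sub_re, Complex.mul_re] at this
    exact hc this
  rw [fourierCoeffOn_eq_integral]
  have key : ∀ x : ℝ, (fourier (-n) (x : AddCircle (0 + 2 * π - 0))) • Complex.cosh ((c * (x - π) : ℝ))
      = (Complex.exp (-(c:ℂ) * π) / 2) * Complex.exp (((c:ℂ) - Complex.I * n) * x)
        + (Complex.exp ((c:ℂ) * π) / 2) * Complex.exp ((-(c:ℂ) - Complex.I * n) * x) := by
    intro x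
    rw [fourier_coe_apply, smul_eq_mul, Complex.cosh]
    push_cast
    rw [show 2 * (π:ℂ) * Complex.I * (-n) * x / (0 + 2 * π - 0) = -(Complex.I * n * x) by
      field_simp; ring]
    have ea : Complex.exp (-(Complex.I * n * x)) * Complex.exp ((c:ℂ) * (x - π))
        = Complex.exp (-(c:ℂ) * π) * Complex.exp (((c:ℂ) - Complex.I * n) * x) := by
      rw [← Complex.exp_add, ← Complex.exp_add]; congr 1; ring
    have eb : Complex.exp (-(Complex.I * n * x)) * Complex.exp (-((c:ℂ) * (x - π)))
        = Complex.exp ((c:ℂ) * π) * Complex.exp ((-(c:ℂ) - Complex.I * n) * x) := by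
      rw [← Complex.exp_add, ← Complex.exp_add]; congr 1; ring
    linear_combination ea / 2 + eb / 2
  rw [intervalIntegral.integral_congr (fun x _ => key x)]
  rw [intervalIntegral.integral_add
    ((Continuous.intervalIntegrable (by fun_prop) _ _ : IntervalIntegrable (fun x : ℝ => Complex.exp (-(c:ℂ) * π) / 2 * Complex.exp (((c:ℂ) - Complex.I * n) * x)) MeasureTheory.volume _ _))
    ((Continuous.intervalIntegrable (by fun_prop) _ _ : IntervalIntegrable (fun x : ℝ => Complex.exp ((c:ℂ) * π) / 2 * Complex.exp ((-(c:ℂ) - Complex.I * n) * x)) MeasureTheory.volume _ _)),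
    intervalIntegral.integral_const_mul, intervalIntegral.integral_const_mul,
    integral_exp_mul_complex h1, integral_exp_mul_complex h2]
  simp only [zero_add, sub_zero, Complex.ofReal_zero, mul_zero, Complex.exp_zero]
  have e1 : Complex.exp (((c:ℂ) - Complex.I * n) * ((2 * π : ℝ) : ℂ))
      = Complex.exp ((c:ℂ) * π) * Complex.exp ((c:ℂ) * π) := by
    rw [show ((c:ℂ) - Complex.I * n) * ((2 * π : ℝ) : ℂ) = ((c:ℂ)*π + (c:ℂ)*π) + ((-n : ℤ) : ℂ) * (2*π*Complex.I) by push_cast; ring,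
      Complex.exp_add, Complex.exp_add, Complex.exp_int_mul_two_pi_mul_I, mul_one]
  have e2 : Complex.exp ((-(c:ℂ) - Complex.I * n) * ((2 * π : ℝ) : ℂ))
      = Complex.exp (-(c:ℂ) * π) * Complex.exp (-(c:ℂ) * π) := by
    rw [show ((-(c:ℂ)) - Complex.I * n) * ((2 * π : ℝ) : ℂ) = ((-(c:ℂ))*π + (-(c:ℂ))*π) + ((-n : ℤ) : ℂ) * (2*π*Complex.I) by push_cast; ring,
      Complex.exp_add, Complex.exp_add, Complex.exp_int_mul_two_pi_mul_I, mul_one]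
  have hsq : ((c:ℂ) ^ 2 + (n:ℂ) ^ 2) ≠ 0 := by
    have hfac : ((c:ℂ) ^ 2 + (n:ℂ) ^ 2) = ((c:ℂ) - Complex.I * n) * ((c:ℂ) + Complex.I * n) := by
      linear_combination ((n:ℂ)^2) * Complex.I_sq
    rw [hfac]
    refine mul_ne_zero h1 fun h => h2 ?_
    rw [show -(c:ℂ) - Complex.I*n = -((c:ℂ) + Complex.I*n) from by ring, h, neg_zero]
  have hexp : Complex.exp (-(c:ℂ) * π) = (Complex.exp ((c:ℂ) * π))⁻¹ := by
    rw [← Complex.exp_neg]; ring_nf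
  have hexp' : Complex.exp (-((π:ℂ) * c)) = (Complex.exp ((c:ℂ) * π))⁻¹ := by
    rw [← Complex.exp_neg]; ring_nf
  have hexp'' : Complex.exp ((π:ℂ) * c) = Complex.exp ((c:ℂ) * π) := by ring_nf
  rw [Complex.sinh, Complex.real_smul, e1, e2, hexp, hexp', hexp'']
  have hu : Complex.exp ((c:ℂ)*π) ≠ 0 := Complex.exp_ne_zero _
  have hab' : ((c:ℂ)^2 + (n:ℂ)^2) = -(((c:ℂ) - Complex.I*n) * (-(c:ℂ) - Complex.I*n)) := by
    linear_combination ((n:ℂ)^2) * Complex.I_sq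
  rw [hab']
  have hD : -(((c:ℂ) - Complex.I*n) * (-(c:ℂ) - Complex.I*n)) ≠ 0 :=
    neg_ne_zero.2 (mul_ne_zero h1 h2)
  push_cast
  field_simp [hu, hπ, h1, h2]
  ring_nf

lemma summable_aux (c : ℝ) : Summable (fun n : ℕ => 1/(c^2+((n:ℝ)+1)^2)) := by
  have hb : Summable (fun n : ℕ => 1/((n:ℝ)+1)^2) := by
    have := (summable_nat_add_iff 1).2 ((summable_one_div_nat_pow (p := 2)).2 one_lt_two)
    simpa using this
  refine Summable.of_nonneg_of_le (fun n => by positivity) (fun n => ?_) hb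
  apply one_div_le_one_div_of_le (by positivity)
  nlinarith [sq_nonneg c]

set_option maxHeartbeats 2000000 in
lemma tsum_inv_add_sq (c : ℝ) (hc : 0 < c) :
    ∑' n : ℕ, 1/(c^2+((n:ℝ)+1)^2)
      = (π * Real.cosh (π*c) / Real.sinh (π*c) - 1/c)/(2*c) := by
  haveI : Fact ((0:ℝ) < 2*π) := ⟨by positivity⟩
  set A := ∑' n : ℕ, 1/(c^2+((n:ℝ)+1)^2) with hA_def
  have hS := summable_aux c
  have hA : HasSum (fun n : ℕ => 1/(c^2+((n:ℝ)+1)^2)) A := hS.hasSum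
  have h1 : HasSum (fun n : ℕ => (fun m : ℤ => 1/(c^2+(m:ℝ)^2)) ((n:ℤ)+1)) A := by
    have he : (fun n : ℕ => (fun m : ℤ => 1/(c^2+(m:ℝ)^2)) ((n:ℤ)+1))
        = fun n : ℕ => 1/(c^2+((n:ℝ)+1)^2) := by
      funext n; push_cast; ring
    rw [he]; exact hA
  have h2 : HasSum (fun n : ℕ => (fun m : ℤ => 1/(c^2+(m:ℝ)^2)) (-((n:ℤ)+1))) A := by
    have he : (fun n : ℕ => (fun m : ℤ => 1/(c^2+(m:ℝ)^2)) (-((n:ℤ)+1)))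
        = fun n : ℕ => 1/(c^2+((n:ℝ)+1)^2) := by
      funext n; push_cast; ring_nf
    rw [he]; exact hA
  have hZ : HasSum (fun m : ℤ => 1/(c^2+(m:ℝ)^2)) (A + 1/c^2 + A) := by
    have h3 := HasSum.of_add_one_of_neg_add_one (f := fun m : ℤ => 1/(c^2+(m:ℝ)^2)) h1 h2
    simpa using h3
  set K : ℂ := (c:ℂ) * Complex.sinh (π*c) / π with hK_def
  have hZK : HasSum (fun i : ℤ => K / ((c:ℂ)^2+(i:ℂ)^2)) (K * ((A + 1/c^2 + A : ℝ) : ℂ)) := by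
    have h := (Complex.hasSum_ofReal.2 hZ).mul_left K
    have heq : (fun i : ℤ => K / ((c:ℂ)^2+(i:ℂ)^2))
        = fun i : ℤ => K * ((1/(c^2+(i:ℝ)^2) : ℝ) : ℂ) := by
      funext i; push_cast; ring
    rw [heq]; exact h
  have hf_end : (fun t : ℝ => Complex.cosh ((c * (t - π) : ℝ))) 0
      = (fun t : ℝ => Complex.cosh ((c * (t - π) : ℝ))) (0 + 2*π) := by
    simp only
    rw [show c * ((0:ℝ) - π) = -(c * ((0 + 2*π) - π)) by ring, Complex.ofReal_neg,
      Complex.cosh_neg]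
  have hcont : Continuous (AddCircle.liftIco (2*π) 0 (fun t : ℝ => Complex.cosh ((c * (t - π) : ℝ)))) :=
    AddCircle.liftIco_continuous hf_end (Continuous.continuousOn (by fun_prop))
  have hcoeff : ∀ i : ℤ,
      fourierCoeff (AddCircle.liftIco (2*π) 0 (fun t : ℝ => Complex.cosh ((c * (t - π) : ℝ)))) i
        = K / ((c:ℂ)^2+(i:ℂ)^2) := fun i =>
    (fourierCoeff_liftIco_eq (T := 2*π) _ i).trans (cosh_fourierCoeffOn c hc.ne' i)
  have hsummable : Summable (fourierCoeff
      (⇑(⟨_, hcont⟩ : C(AddCircle (2*π), ℂ)))) :=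
    hZK.summable.congr (fun i => (hcoeff i).symm)
  have hpt := has_pointwise_sum_fourier_series_of_summable hsummable (((0:ℝ) : AddCircle (2*π)))
  have hF0 : AddCircle.liftIco (2*π) 0 (fun t : ℝ => Complex.cosh ((c * (t - π) : ℝ)))
      (((0:ℝ) : AddCircle (2*π))) = ((Real.cosh (π*c) : ℝ) : ℂ) := by
    rw [AddCircle.liftIco_coe_apply (by rw [zero_add]; exact ⟨le_refl 0, by positivity⟩)]
    show Complex.cosh ((c * ((0:ℝ) - π) : ℝ)) = ((Real.cosh (π*c) : ℝ) : ℂ)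
    rw [show c * ((0:ℝ) - π) = -(π*c) by ring, Complex.ofReal_neg, Complex.cosh_neg,
      Complex.ofReal_cosh]
  have hpt' : HasSum (fun i : ℤ => K / ((c:ℂ)^2+(i:ℂ)^2)) ((Real.cosh (π*c) : ℝ) : ℂ) := by
    simp only [ContinuousMap.coe_mk, hcoeff, hF0, fourier_coe_apply, Complex.ofReal_zero,
      mul_zero, zero_div, Complex.exp_zero, smul_eq_mul, mul_one] at hpt
    exact hpt
  have keyC : K * ((A + 1/c^2 + A : ℝ) : ℂ) = ((Real.cosh (π*c) : ℝ) : ℂ) := hZK.unique hpt'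
  have keyR : (c * Real.sinh (π*c) / π) * (A + 1/c^2 + A) = Real.cosh (π*c) := by
    have hKr : K = ((c * Real.sinh (π*c) / π : ℝ) : ℂ) := by
      rw [hK_def]; push_cast [Complex.ofReal_sinh]; ring
    rw [hKr, ← Complex.ofReal_mul] at keyC
    exact_mod_cast keyC
  have hs : 0 < Real.sinh (π*c) := Real.sinh_pos_iff.2 (by positivity)
  have hπ0 : (0:ℝ) < π := Real.pi_pos
  have hc0 : c ≠ 0 := hc.ne'
  field_simp at keyR ⊢
  apply mul_right_cancel₀ hc0
  linear_combination c * keyR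

lemma summable_g (x : ℝ) : Summable (fun n : ℕ => 1/(4*x^2+(n:ℝ)^2)) := by
  rw [← summable_nat_add_iff 1]
  refine (summable_aux (2*x)).congr fun n => ?_
  push_cast; ring_nf

lemma tsum_odd (x : ℝ) (hx : 0 < x) :
    ∑' m : ℕ, 1/(4*x^2+(2*(m:ℝ)+1)^2) = π * Real.tanh (π*x) / (8*x) := by
  set f : ℕ → ℝ := fun n => 1/(4*x^2+(n:ℝ)^2) with hf
  have hg : Summable f := summable_g x
  have he : Summable (fun k : ℕ => f (2*k)) :=
    hg.comp_injective (fun a b h => by omega)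
  have ho : Summable (fun k : ℕ => f (2*k+1)) :=
    hg.comp_injective (fun a b h => by omega)
  have E1 := tsum_even_add_odd he ho
  -- total sum
  have hx2 : 0 < 2*x := by positivity
  have htot : ∑' k, f k = f 0 + (π * Real.cosh (π*(2*x)) / Real.sinh (π*(2*x)) - 1/(2*x))/(2*(2*x)) := by
    rw [Summable.tsum_eq_zero_add hg]
    congr 1
    rw [← tsum_inv_add_sq (2*x) hx2]
    refine tsum_congr fun k => ?_
    simp only [hf]; push_cast; ring_nf
  -- even sum
  have heven : ∑' k, f (2*k) = f 0 + (1/4) * ((π * Real.cosh (π*x) / Real.sinh (π*x) - 1/x)/(2*x)) := by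
    rw [Summable.tsum_eq_zero_add he]
    congr 1
    rw [← tsum_inv_add_sq x hx, ← tsum_mul_left]
    refine tsum_congr fun k => ?_
    simp only [hf]
    have hd2 : x^2+((k:ℝ)+1)^2 ≠ 0 := by positivity
    have hd1 : 4*x^2+(2*((k:ℝ)+1))^2 ≠ 0 := by positivity
    push_cast
    field_simp
    ring
  -- odd sum is the target
  have hodd : ∑' m : ℕ, 1/(4*x^2+(2*(m:ℝ)+1)^2) = ∑' k, f (2*k+1) := by
    refine tsum_congr fun k => ?_
    simp only [hf]; push_cast; ring_nf
  have hT : ∑' k, f (2*k+1) = (∑' k, f k) - ∑' k, f (2*k) := by linarith [E1]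
  rw [hodd, hT, htot, heven]
  have h2 : π*(2*x) = 2*(π*x) := by ring
  rw [h2, Real.sinh_two_mul, Real.cosh_two_mul, Real.tanh_eq_sinh_div_cosh]
  have hs : 0 < Real.sinh (π*x) := Real.sinh_pos_iff.2 (by positivity)
  have hch : 0 < Real.cosh (π*x) := Real.cosh_pos _
  have hx0 : x ≠ 0 := hx.ne'
  have hπ0 : (0:ℝ) < π := Real.pi_pos
  field_simp
  ring

set_option maxHeartbeats 1000000 in
/-- Partial fraction identity for `∑_{p≥1} (−1)^p e^{−2πpx}`. -/
theorem alt_exp_partial_fractions (x : ℝ) (hx : 0 < x) :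
    ((∑' p : ℕ, (-1 : ℝ) ^ (p + 1) * Real.exp (-2 * π * ((p : ℝ) + 1) * x) : ℝ) : ℂ) =
      -1 / 2 + (Complex.I / (π : ℂ)) *
        ∑' m : ℕ, (1 / ((2 * (m : ℂ) + 1) + 2 * Complex.I * (x : ℂ)) -
          1 / ((2 * (m : ℂ) + 1) - 2 * Complex.I * (x : ℂ))) := by
  have hπ0 : (0:ℝ) < π := Real.pi_pos
  set r : ℝ := Real.exp (-(2*π*x)) with hr_def
  have hr1 : r < 1 := Real.exp_lt_one_iff.2 (by nlinarith)
  have hr0 : 0 < r := Real.exp_pos _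
  -- LHS
  have hterm : ∀ p : ℕ, (-1 : ℝ) ^ (p + 1) * Real.exp (-2 * π * ((p : ℝ) + 1) * x)
      = (-r) ^ p * (-r) := by
    intro p
    have hexp : Real.exp (-2 * π * ((p:ℝ) + 1) * x) = r^(p+1) := by
      rw [hr_def, ← Real.exp_nat_mul]
      congr 1
      push_cast
      ring
    rw [hexp, ← mul_pow, neg_one_mul, ← pow_succ]
  have hLHS : ∑' p : ℕ, (-1 : ℝ) ^ (p + 1) * Real.exp (-2 * π * ((p : ℝ) + 1) * x)
      = -r / (1 + r) := by
    rw [tsum_congr hterm, tsum_mul_right, tsum_geometric_of_norm_lt_one (by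
      rw [norm_neg, Real.norm_eq_abs, abs_of_pos hr0]; exact hr1)]
    have h1r : 1 + r ≠ 0 := by positivity
    rw [sub_neg_eq_add]
    field_simp
  -- RHS term identity
  have hterm2 : ∀ m : ℕ, (1 / ((2 * (m : ℂ) + 1) + 2 * Complex.I * (x : ℂ)) -
        1 / ((2 * (m : ℂ) + 1) - 2 * Complex.I * (x : ℂ)))
      = (-4*Complex.I*(x:ℂ)) * ((1/(4*x^2+(2*(m:ℝ)+1)^2) : ℝ) : ℂ) := by
    intro m
    have hm0 : (0:ℝ) ≤ (m:ℝ) := Nat.cast_nonneg m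
    have ha : ((2 * (m : ℂ) + 1) + 2*Complex.I*(x:ℂ)) ≠ 0 := by
      intro h
      have h' := congrArg Complex.re h
      simp [Complex.add_re, Complex.mul_re, Complex.I_re, Complex.I_im] at h'
      nlinarith
    have hb : ((2 * (m : ℂ) + 1) - 2*Complex.I*(x:ℂ)) ≠ 0 := by
      intro h
      have h' := congrArg Complex.re h
      simp [Complex.sub_re, Complex.add_re, Complex.mul_re, Complex.I_re, Complex.I_im] at h'
      nlinarith
    have hd : ((4*x^2+(2*(m:ℝ)+1)^2 : ℝ) : ℂ) ≠ 0 := by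
      rw [Complex.ofReal_ne_zero]
      positivity
    have hR : (-4*Complex.I*(x:ℂ)) * ((1/(4*x^2+(2*(m:ℝ)+1)^2) : ℝ) : ℂ)
        = (-4*Complex.I*(x:ℂ)) / ((4*x^2+(2*(m:ℝ)+1)^2 : ℝ) : ℂ) := by
      push_cast
      ring
    rw [hR, div_sub_div _ _ ha hb, div_eq_div_iff (mul_ne_zero ha hb) hd]
    push_cast
    linear_combination (-16*Complex.I*(x:ℂ)^3) * Complex.I_sq
  -- assemble RHS sum
  have hRHS : ∑' m : ℕ, (1 / ((2 * (m : ℂ) + 1) + 2 * Complex.I * (x : ℂ)) -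
        1 / ((2 * (m : ℂ) + 1) - 2 * Complex.I * (x : ℂ)))
      = (-4*Complex.I*(x:ℂ)) * ((π * Real.tanh (π*x) / (8*x) : ℝ) : ℂ) := by
    rw [tsum_congr hterm2, tsum_mul_left, ← Complex.ofReal_tsum, tsum_odd x hx]
  rw [hLHS, hRHS]
  -- final algebra
  have hπC : (π : ℂ) ≠ 0 := Complex.ofReal_ne_zero.2 hπ0.ne'
  set T : ℝ := Real.tanh (π*x) with hT_def
  have hIπ : (Complex.I / (π:ℂ)) * ((-4*Complex.I*(x:ℂ)) * ((π * T / (8*x) : ℝ) : ℂ))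
      = ((T / 2 : ℝ) : ℂ) := by
    have hx0 : (x:ℝ) ≠ 0 := hx.ne'
    have hxC : (x:ℂ) ≠ 0 := Complex.ofReal_ne_zero.2 hx0
    push_cast
    field_simp
    linear_combination (-8*(T:ℂ)) * Complex.I_sq
  rw [hIπ]
  rw [show (-1/2 : ℂ) = ((-1/2 : ℝ) : ℂ) by norm_num, ← Complex.ofReal_add]
  rw [Complex.ofReal_inj]
  -- real identity
  have hu : Real.exp (π*x) * Real.exp (-(π*x)) = 1 := by
    rw [← Real.exp_add]; simp
  have hrr : r = Real.exp (-(π*x)) * Real.exp (-(π*x)) := by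
    rw [hr_def, ← Real.exp_add]; ring_nf
  rw [hT_def, Real.tanh_eq_sinh_div_cosh, Real.sinh_eq, Real.cosh_eq]
  have h1r : (0:ℝ) < 1 + r := by positivity
  have hch : (0:ℝ) < Real.exp (π*x) + Real.exp (-(π*x)) := by positivity
  rw [hrr]
  field_simp
  nlinarith [hu, Real.exp_pos (π*x), Real.exp_pos (-(π*x))]
end

section
/- Define P_{2p}(k) = ∑_{n=0}^{p−1} C(2p, 2n+1) X_{2n+1}(0,k,ik') X_{2p−2n−1}(0,k,ik') for p ≥ 1, where X_j are the Schett polynomials and k' = √(1−k²). Then P₂(k) = −2(kk')², P₄(k) = −8(kk')²(2k²−1), and P₆(k) = −16(kk')²(2 − 17k² + 17k⁴). -/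
open MvPolynomial

/-- Schett polynomials: `X₀ = x`, `Xₙ = (yz ∂ₓ + zx ∂_y + xy ∂_z) X_{n-1}`. -/
noncomputable def schett : ℕ → MvPolynomial (Fin 3) ℂ
  | 0 => X 0
  | n + 1 =>
      X 1 * X 2 * pderiv 0 (schett n) + X 2 * X 0 * pderiv 1 (schett n) +
        X 0 * X 1 * pderiv 2 (schett n)

/-- The self-convolution of Schett polynomial evaluations,
`P_{2p}(k) = ∑_{n=0}^{p−1} C(2p,2n+1) X_{2n+1}(0,k,ik') X_{2p−2n−1}(0,k,ik')`. -/
noncomputable def schettP (k : ℝ) (p : ℕ) : ℂ :=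
  ∑ n ∈ Finset.range p, (Nat.choose (2 * p) (2 * n + 1) : ℂ) *
    eval ![0, (k : ℂ), Complex.I * (Real.sqrt (1 - k ^ 2) : ℂ)] (schett (2 * n + 1)) *
    eval ![0, (k : ℂ), Complex.I * (Real.sqrt (1 - k ^ 2) : ℂ)] (schett (2 * p - 2 * n - 1))

lemma pderiv_ofNat (i : Fin 3) (n : ℕ) [n.AtLeastTwo] :
    pderiv i (no_index (OfNat.ofNat n) : MvPolynomial (Fin 3) ℂ) = 0 := by
  rw [show (OfNat.ofNat n : MvPolynomial (Fin 3) ℂ) = C (OfNat.ofNat n : ℂ) from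
    (map_ofNat C n).symm, pderiv_C]

lemma schett_one : schett 1 = X 1 * X 2 := by
  simp [schett, pderiv_X, Pi.single_apply]

lemma schett_two : schett 2 = X 0 * (X 1 ^ 2 + X 2 ^ 2) := by
  show schett (1 + 1) = _
  rw [schett, schett_one]
  simp [pderiv_X, Pi.single_apply]; ring

lemma schett_three : schett 3 = X 1 * X 2 * (X 1 ^ 2 + X 2 ^ 2 + 4 * X 0 ^ 2) := by
  show schett (2 + 1) = _
  rw [schett, schett_two]
  simp [pderiv_X, Pi.single_apply, pderiv_ofNat]; ring

lemma schett_four : schett 4 = X 0 * (X 1 ^ 4 + X 2 ^ 4 + 14 * X 1 ^ 2 * X 2 ^ 2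
    + 4 * X 0 ^ 2 * (X 1 ^ 2 + X 2 ^ 2)) := by
  show schett (3 + 1) = _
  rw [schett, schett_three]
  simp [pderiv_X, Pi.single_apply, pderiv_ofNat]; ring

lemma schett_five : schett 5 = X 1 * X 2 * (X 1 ^ 4 + X 2 ^ 4 + 14 * X 1 ^ 2 * X 2 ^ 2
    + 44 * X 0 ^ 2 * (X 1 ^ 2 + X 2 ^ 2) + 16 * X 0 ^ 4) := by
  show schett (4 + 1) = _
  rw [schett, schett_four]
  simp [pderiv_X, Pi.single_apply, pderiv_ofNat]; ring

/-- First values of `P_{2p}(k)`. -/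
theorem schettP_first_values (k : ℝ) (hk0 : 0 < k) (hk1 : k < 1)
    (k' : ℝ) (hk' : k' = Real.sqrt (1 - k ^ 2)) :
    schettP k 1 = -2 * ((k : ℂ) * (k' : ℂ)) ^ 2 ∧
    schettP k 2 = -8 * ((k : ℂ) * (k' : ℂ)) ^ 2 * (2 * (k : ℂ) ^ 2 - 1) ∧
    schettP k 3 = -16 * ((k : ℂ) * (k' : ℂ)) ^ 2 *
      (2 - 17 * (k : ℂ) ^ 2 + 17 * (k : ℂ) ^ 4) := by
  subst hk'
  set K : ℂ := (k : ℂ) with hK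
  set t : ℂ := ((Real.sqrt (1 - k ^ 2) : ℝ) : ℂ) with htdef
  have hI : Complex.I ^ 2 = -1 := Complex.I_sq
  have ht : t ^ 2 = 1 - K ^ 2 := by
    rw [htdef, hK]
    norm_cast
    rw [Real.sq_sqrt (by nlinarith : (0:ℝ) ≤ 1 - k ^ 2)]
  have e1 : eval ![0, K, Complex.I * t] (schett 1) = Complex.I * K * t := by
    simp [schett_one]; ring
  have e3 : eval ![0, K, Complex.I * t] (schett 3)
      = Complex.I * K * t * (2 * K ^ 2 - 1) := by
    simp [schett_three]
    linear_combination (Complex.I * K * t * t ^ 2) * hI - (Complex.I * K * t) * ht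
  have e5 : eval ![0, K, Complex.I * t] (schett 5)
      = Complex.I * K * t * (16 * K ^ 4 - 16 * K ^ 2 + 1) := by
    simp [schett_five]
    linear_combination (Complex.I * K * t * ((Complex.I ^ 2 - 1) * t ^ 4 + 14 * K ^ 2 * t ^ 2)) * hI
      + (Complex.I * K * t * (t ^ 2 + 1 - 15 * K ^ 2)) * ht
  refine ⟨?_, ?_, ?_⟩
  · simp only [schettP, Finset.sum_range_succ, Finset.sum_range_zero]
    rw [← htdef, ← hK]
    norm_num [e1]
    linear_combination (2 * K ^ 2 * t ^ 2) * hI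
  · simp only [schettP, Finset.sum_range_succ, Finset.sum_range_zero]
    rw [← htdef, ← hK]
    norm_num [e1, e3]
    linear_combination (8 * K ^ 2 * t ^ 2 * (2 * K ^ 2 - 1)) * hI
  · simp only [schettP, Finset.sum_range_succ, Finset.sum_range_zero]
    rw [← htdef, ← hK]
    norm_num [e1, e3, e5, show Nat.choose 6 3 = 20 from rfl]
    linear_combination (K ^ 2 * t ^ 2 * (272 * K ^ 4 - 272 * K ^ 2 + 32)) * hI
end
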